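/- Let R be a noetherian ring and M a finitely generated R-module with no nonzero projective direct summands, such that M decomposes as a finite direct sum of modules with local endomorphism rings. Then every endomorphism of M that factors through a projective module lies in the Jacobson radical of End_R(M). -/

import Mathlib

/-!
Let `eᵢ = ιᵢ πᵢ` be the idempotents of the decomposition `M = ⨁ Mᵢ`, so `f = ∑ f eᵢ` and it
suffices that each `f eᵢ` is in the radical, i.e. that `1 - y f ιᵢ πᵢ` is a unit for every `y`.
By `(1 - ab)⁻¹ = 1 + a (1 - ba)⁻¹ b` this holds once `1 - πᵢ y f ιᵢ` is a unit of `End(Mᵢ)`.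
Now `πᵢ y f ιᵢ` factors through a projective module, so it is not a unit: otherwise `Mᵢ` would be
a retract of a projective module, hence a nonzero projective direct summand of `M`. In the local
ring `End(Mᵢ)` a nonunit `x` has `1 - x` invertible.
-/

/-- An endomorphism of a module `M` *factors through a projective module* if it is
the composite of a map into some projective `R`-module followed by a map back to `M`. -/
def FactorsThroughProjective (R : Type) [Ring R] (M : Type) [AddCommGroup M]
    [Module R M] (f : Module.End R M) : Prop :=
  ∃ (P : Type) (_ : AddCommGroup P) (_ : Module R P), Module.Projective R P ∧
    ∃ (g : M →ₗ[R] P) (h : P →ₗ[R] M), f = h.comp g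

namespace FactorsThroughProjective

variable {R M N : Type} [Ring R] [AddCommGroup M] [Module R M] [AddCommGroup N] [Module R N]
  {f : Module.End R M}

theorem comp_comp (hf : FactorsThroughProjective R M f) (a : N →ₗ[R] M) (b : M →ₗ[R] N) :
    FactorsThroughProjective R N (b ∘ₗ f ∘ₗ a) := by
  obtain ⟨P, _, _, hP, g, h, rfl⟩ := hf
  exact ⟨P, _, _, hP, g ∘ₗ a, b ∘ₗ h, rfl⟩

theorem projective_of_isUnit (hf : FactorsThroughProjective R M f) (hu : IsUnit f) :
    Module.Projective R M := by
  obtain ⟨P, _, _, hP, g, h, rfl⟩ := hf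
  exact .of_split g (↑hu.unit⁻¹ ∘ₗ h) hu.val_inv_mul

theorem isUnit_one_sub [IsLocalRing (Module.End R M)] (hM : ¬ Module.Projective R M)
    (hf : FactorsThroughProjective R M f) : IsUnit (1 - f) :=
  (IsLocalRing.isUnit_or_isUnit_of_add_one (add_sub_cancel f 1)).resolve_left fun hu =>
    hM (hf.projective_of_isUnit hu)

end FactorsThroughProjective

theorem LinearMap.isUnit_one_sub_comp_of_isUnit_one_sub_comp {R A B : Type*} [Ring R]
    [AddCommGroup A] [Module R A] [AddCommGroup B] [Module R B] (a : A →ₗ[R] B) (b : B →ₗ[R] A)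
    (h : IsUnit (1 - b ∘ₗ a : Module.End R A)) : IsUnit (1 - a ∘ₗ b : Module.End R B) := by
  set c : Module.End R A := ↑h.unit⁻¹
  refine ⟨⟨1 - a ∘ₗ b, 1 + a ∘ₗ c ∘ₗ b, ?_, ?_⟩, rfl⟩
  · calc (1 - a ∘ₗ b) * (1 + a ∘ₗ c ∘ₗ b) = 1 - a ∘ₗ b + a ∘ₗ ((1 - b ∘ₗ a) * c) ∘ₗ b := by
          ext x; simp [Module.End.mul_apply]; abel
      _ = 1 := by
          rw [h.mul_val_inv]; simp only [Module.End.one_eq_id, LinearMap.id_comp, sub_add_cancel]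
  · calc (1 + a ∘ₗ c ∘ₗ b) * (1 - a ∘ₗ b) = 1 - a ∘ₗ b + a ∘ₗ (c * (1 - b ∘ₗ a)) ∘ₗ b := by
          ext x; simp [Module.End.mul_apply]
      _ = 1 := by
          rw [h.val_inv_mul]; simp only [Module.End.one_eq_id, LinearMap.id_comp, sub_add_cancel]

theorem TwoSidedIdeal.mem_jacobson_bot_of_forall_isUnit_one_sub_mul {E : Type*} [Ring E] {x : E}
    (h : ∀ y, IsUnit (1 - y * x)) : x ∈ (⊥ : TwoSidedIdeal E).jacobson := by
  refine mem_jacobson_iff.2 fun y => ?_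
  obtain ⟨u, hu⟩ := h (-y)
  refine ⟨↑u⁻¹, (mem_bot _).2 ?_⟩
  calc ↑u⁻¹ * y * x + ↑u⁻¹ - 1 = ↑u⁻¹ * (1 - -y * x) - 1 := by noncomm_ring
    _ = 0 := by rw [← hu, u.inv_mul, sub_self]

namespace DirectSum.IsInternal

variable {R M ι : Type*} [Ring R] [AddCommGroup M] [Module R M] [DecidableEq ι]
  {A : ι → Submodule R M}

theorem isCompl_iSup_ne (h : IsInternal A) (i : ι) : IsCompl (A i) (⨆ (j) (_ : j ≠ i), A j) :=
  ⟨h.submodule_iSupIndep i, codisjoint_iff.2 <| by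
    rw [← iSup_split_single, h.submodule_iSup_eq_top]⟩

noncomputable def proj (h : IsInternal A) (i : ι) : M →ₗ[R] A i :=
  component R ι (fun i => A i) i ∘ₗ (LinearEquiv.ofBijective (coeLinearMap A) h).symm.toLinearMap

theorem sum_subtype_comp_proj [Fintype ι] (h : IsInternal A) :
    ∑ i, (A i).subtype ∘ₗ h.proj i = (1 : Module.End R M) := by
  ext x
  set e := LinearEquiv.ofBijective (coeLinearMap A) h
  have hx : coeLinearMap A (e.symm x) = x := e.apply_symm_apply x
  conv_rhs => rw [Module.End.one_apply, ← hx, ← sum_univ_of (e.symm x)]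
  simp [proj, e, ← apply_eq_component]

end DirectSum.IsInternal

theorem factorsThroughProjective_subset_jacobson_general
    (R : Type) [Ring R]
    (M : Type) [AddCommGroup M] [Module R M]
    -- no nonzero projective direct summands:
    (hnp : ∀ N : Submodule R M, (∃ N' : Submodule R M, IsCompl N N') →
      Module.Projective R N → N = ⊥)
    -- finite direct sum decomposition into submodules with local endomorphism rings:
    (n : ℕ) (Mi : Fin n → Submodule R M) (hdec : DirectSum.IsInternal Mi)
    (hloc : ∀ i, IsLocalRing (Module.End R (Mi i)))
    (f : Module.End R M) (hf : FactorsThroughProjective R M f) :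
    f ∈ (⊥ : TwoSidedIdeal (Module.End R M)).jacobson := by
  rw [← mul_one f, ← hdec.sum_subtype_comp_proj, Finset.mul_sum]
  refine sum_mem fun i _ =>
    TwoSidedIdeal.mem_jacobson_bot_of_forall_isUnit_one_sub_mul fun y => ?_
  have hMi : ¬ Module.Projective R (Mi i) := fun hproj => by
    have : Subsingleton (Mi i) := Submodule.subsingleton_iff_eq_bot.2 <|
      hnp _ ⟨_, hdec.isCompl_iSup_ne i⟩ hproj
    exact not_subsingleton (Module.End R (Mi i)) inferInstance
  have hcorner := (hf.comp_comp (Mi i).subtype (hdec.proj i ∘ₗ y)).isUnit_one_sub hMi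
  simpa [Module.End.mul_eq_comp, LinearMap.comp_assoc] using
    LinearMap.isUnit_one_sub_comp_of_isUnit_one_sub_comp (y ∘ₗ f ∘ₗ (Mi i).subtype) _ hcorner

/-- Let `R` be a noetherian ring and `M` a finitely generated `R`-module with no
nonzero projective direct summands, which decomposes as a finite (internal) direct
sum of submodules with local endomorphism rings.  Then every endomorphism of `M`
factoring through a projective module lies in the Jacobson radical of `End_R(M)`. -/
theorem factorsThroughProjective_subset_jacobson
    (R : Type) [Ring R] [IsNoetherianRing R]
    (M : Type) [AddCommGroup M] [Module R M] [Module.Finite R M]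
    -- no nonzero projective direct summands:
    (hnp : ∀ N : Submodule R M, (∃ N' : Submodule R M, IsCompl N N') →
      Module.Projective R N → N = ⊥)
    -- finite direct sum decomposition into submodules with local endomorphism rings:
    (n : ℕ) (Mi : Fin n → Submodule R M) (hdec : DirectSum.IsInternal Mi)
    (hloc : ∀ i, IsLocalRing (Module.End R (Mi i)))
    (f : Module.End R M) (hf : FactorsThroughProjective R M f) :
    f ∈ (⊥ : TwoSidedIdeal (Module.End R M)).jacobson :=
  factorsThroughProjective_subset_jacobson_general R M hnp n Mi hdec hloc f hf
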